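/- arXiv:1312.2582 — 3 statements merged into one kernel-verified Lean document; each statement's English description precedes it below -/
import Mathlib

section
/- For every a > 0, the function T_a is integrable on ℝ and ∫_{−∞}^{∞} T_a(x) dx = −π/a. Equivalently, ∫_{−∞}^{∞} (si(a|x|)·sin(a|x|) + ci(a|x|)·cos(a|x|)) dx = −π/a. -/
open Filter MeasureTheory Topology

/-- The sine integral `si(x) = -∫_x^∞ sin t / t dt`, defined via the improper
(limit of interval integrals) form. -/
noncomputable def si (x : ℝ) : ℝ :=
  - limUnder Filter.atTop (fun R : ℝ => ∫ t in x..R, Real.sin t / t)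

/-- The cosine integral `ci(x) = -∫_x^∞ cos t / t dt`, defined via the improper
(limit of interval integrals) form. -/
noncomputable def ci (x : ℝ) : ℝ :=
  - limUnder Filter.atTop (fun R : ℝ => ∫ t in x..R, Real.cos t / t)

/-- The kernel `S_a(x) = sign(x) (si(a|x|) cos(a|x|) - ci(a|x|) sin(a|x|))`, with `S_a(0)=0`. -/
noncomputable def Sker (a x : ℝ) : ℝ :=
  Real.sign x * (si (a * |x|) * Real.cos (a * |x|) - ci (a * |x|) * Real.sin (a * |x|))

/-- The kernel `T_a(x) = si(a|x|) sin(a|x|) + ci(a|x|) cos(a|x|)`. -/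
noncomputable def Tker (a x : ℝ) : ℝ :=
  si (a * |x|) * Real.sin (a * |x|) + ci (a * |x|) * Real.cos (a * |x|)

open Set Real

/-!
With `S y = si y * cos y - ci y * sin y` and `T y = si y * sin y + ci y * cos y` one has
`S' = -T` on `(0, ∞)`, since `si' y = sin y / y` and `ci' y = cos y / y`. Writing `-T y` and
`-S y` as improper integrals of `cos (t - y) / t` and `sin (t - y) / t` over `(y, ∞)` and
integrating by parts gives `-T y = ∫_y^∞ 2 (1 - cos (t - y)) / t³ dt ≥ 0` and
`|S y| ≤ 2 / y`. By Dirichlet's integral (obtained from `1 / t = ∫_0^∞ e^{-st} ds` and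
Fubini), `S 0 = si 0 = -π/2` and `S` is continuous at `0⁺`. Hence the nonnegative derivative
`-T` of `S` is integrable on `(0, ∞)` with integral `S ∞ - S 0 = π/2`, and the substitution
`y = a |x|` gives `∫ T_a = 2 · a⁻¹ · (-π/2) = -π/a`.
-/

section BoundedNumerator

variable {u : ℝ → ℝ} {C : ℝ}

lemma integrableOn_Ioi_inv_pow {n : ℕ} (hn : 2 ≤ n) {a : ℝ} (ha : 0 < a) :
    IntegrableOn (fun t : ℝ => (t ^ n)⁻¹) (Ioi a) := by
  refine (integrableOn_Ioi_rpow_of_lt (a := -(n : ℝ)) ?_ ha).congr_fun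
    (fun t ht => ?_) measurableSet_Ioi
  · have : (2 : ℝ) ≤ n := by exact_mod_cast hn
    linarith
  · simp only [rpow_neg (ha.trans ht).le, rpow_natCast]

lemma integral_Ioi_inv_sq {a : ℝ} (ha : 0 < a) : ∫ t in Ioi a, (t ^ 2)⁻¹ = a⁻¹ := by
  have h := integral_Ioi_rpow_of_lt (by norm_num : (-2 : ℝ) < -1) ha
  rw [← setIntegral_congr_fun measurableSet_Ioi (fun t (ht : t ∈ Ioi a) => by
    rw [rpow_neg (ha.trans ht).le, show (2 : ℝ) = (2 : ℕ) by norm_num, rpow_natCast])] at h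
  rw [h]
  norm_num [rpow_neg_one]

lemma integrableOn_Ioi_div_pow (hu : Continuous u) (hC : ∀ t, |u t| ≤ C) {n : ℕ}
    (hn : 2 ≤ n) {a : ℝ} (ha : 0 < a) : IntegrableOn (fun t => u t / t ^ n) (Ioi a) := by
  refine ((integrableOn_Ioi_inv_pow hn ha).const_mul C).mono'
    (hu.measurable.div (measurable_id.pow_const n)).aestronglyMeasurable ?_
  filter_upwards [ae_restrict_mem measurableSet_Ioi] with t ht
  have htn : 0 < t ^ n := pow_pos (ha.trans ht) n
  rw [norm_div, norm_of_nonneg htn.le, div_eq_mul_inv]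
  exact mul_le_mul_of_nonneg_right (hC t) (inv_nonneg.2 htn.le)

lemma abs_integral_Ioi_div_sq_le (hC : ∀ t, |u t| ≤ C) {a : ℝ} (ha : 0 < a) :
    |∫ t in Ioi a, u t / t ^ 2| ≤ C / a := by
  have hle : ∀ᵐ t ∂volume.restrict (Ioi a), ‖u t / t ^ 2‖ ≤ C * (t ^ 2)⁻¹ := by
    filter_upwards [ae_restrict_mem measurableSet_Ioi] with t ht
    have ht2 : 0 < t ^ 2 := pow_pos (ha.trans ht) 2
    rw [norm_div, norm_of_nonneg ht2.le, div_eq_mul_inv]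
    exact mul_le_mul_of_nonneg_right (hC t) (inv_nonneg.2 ht2.le)
  have h := norm_integral_le_of_norm_le ((integrableOn_Ioi_inv_pow le_rfl ha).const_mul C) hle
  rwa [integral_const_mul, integral_Ioi_inv_sq ha, ← div_eq_mul_inv] at h

lemma tendsto_div_atTop_of_abs_le (hC : ∀ t, |u t| ≤ C) {v : ℝ → ℝ}
    (hv : Tendsto v atTop atTop) :
    Tendsto (fun t => u t / v t) atTop (𝓝 0) := by
  refine squeeze_zero_norm' (a := fun t => C / v t) ?_ (tendsto_const_nhds.div_atTop hv)
  filter_upwards [hv.eventually_gt_atTop 0] with t ht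
  rw [norm_div, norm_of_nonneg ht.le]
  exact div_le_div_of_nonneg_right (hC t) ht.le

end BoundedNumerator

theorem tendsto_intervalIntegral_of_hasDerivAt_sub {f g h : ℝ → ℝ} {a : ℝ}
    (hf : ContinuousOn f (Ici a)) (hh : IntegrableOn h (Ioi a))
    (hderiv : ∀ t ∈ Ici a, HasDerivAt g (f t - h t) t) (hg : Tendsto g atTop (𝓝 0)) :
    Tendsto (fun R => ∫ t in a..R, f t) atTop (𝓝 ((∫ t in Ioi a, h t) - g a)) := by
  have hlim := (hg.sub_const (g a)).add (intervalIntegral_tendsto_integral_Ioi a hh tendsto_id)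
  rw [zero_sub, neg_add_eq_sub] at hlim
  refine hlim.congr' ?_
  filter_upwards [eventually_ge_atTop a] with R hR
  have hIcc : uIcc a R ⊆ Ici a := by rw [uIcc_of_le hR]; exact Icc_subset_Ici_self
  have hhR : IntervalIntegrable h volume a R :=
    (intervalIntegrable_iff_integrableOn_Ioc_of_le hR).2 (hh.mono_set Ioc_subset_Ioi_self)
  have hfR : IntervalIntegrable f volume a R := (hf.mono hIcc).intervalIntegrable
  rw [← intervalIntegral.integral_eq_sub_of_hasDerivAt (fun t ht => hderiv t (hIcc ht))
    (hfR.sub hhR), intervalIntegral.integral_sub hfR hhR]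
  exact sub_add_cancel _ _

lemma integral_Ioi_exp_neg_mul {t : ℝ} (ht : 0 < t) :
    ∫ s in Ioi (0 : ℝ), exp (-(s * t)) = t⁻¹ := by
  have h := integral_exp_mul_Ioi (neg_lt_zero.2 ht) 0
  simp only [mul_zero, exp_zero, neg_div_neg_eq, one_div] at h
  simpa only [neg_mul, mul_comm t] using h

lemma integrableOn_Ioi_exp_neg_mul {t : ℝ} (ht : 0 < t) :
    IntegrableOn (fun s => exp (-(s * t))) (Ioi 0) := by
  simpa only [neg_mul, mul_comm t] using integrableOn_exp_mul_Ioi (neg_lt_zero.2 ht) 0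

lemma integral_sin_div_eq_integral_Ioi_laplace {R : ℝ} (hR : 0 ≤ R) :
    ∫ t in 0..R, sin t / t = ∫ s in Ioi (0 : ℝ), ∫ t in 0..R, exp (-(s * t)) * sin t := by
  simp only [intervalIntegral.integral_of_le hR]
  set F : ℝ → ℝ → ℝ := fun t s => exp (-(s * t)) * sin t
  have hnorm : ∀ t ∈ Ioc 0 R, ∫ s in Ioi 0, ‖F t s‖ = |sin t| / t := fun t ht => by
    simp only [F, norm_mul, norm_of_nonneg (exp_pos _).le, Real.norm_eq_abs]
    rw [integral_mul_const, integral_Ioi_exp_neg_mul ht.1, inv_mul_eq_div]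
  have hcont : Continuous (Function.uncurry F) := by fun_prop
  have hint : Integrable (Function.uncurry F)
      ((volume.restrict (Ioc 0 R)).prod (volume.restrict (Ioi 0))) := by
    refine (integrable_prod_iff hcont.aestronglyMeasurable).2 ⟨?_, ?_⟩
    · filter_upwards [ae_restrict_mem measurableSet_Ioc] with t ht
      exact (integrableOn_Ioi_exp_neg_mul ht.1).mul_const (sin t)
    refine (integrableOn_const (C := 1) measure_Ioc_lt_top.ne).mono'
      hcont.aestronglyMeasurable.norm.integral_prod_right' ?_
    filter_upwards [ae_restrict_mem measurableSet_Ioc] with t ht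
    simp only [Function.uncurry_apply_pair, hnorm t ht]
    rw [norm_of_nonneg (div_nonneg (abs_nonneg _) ht.1.le), div_le_one ht.1]
    exact abs_sin_le_abs.trans (abs_of_pos ht.1).le
  rw [← integral_integral_swap hint]
  refine setIntegral_congr_fun measurableSet_Ioc fun t ht => ?_
  simp only [F, integral_mul_const, integral_Ioi_exp_neg_mul ht.1, inv_mul_eq_div]

lemma integral_exp_neg_mul_mul_sin (s R : ℝ) :
    ∫ t in 0..R, exp (-(s * t)) * sin t
      = (1 + s ^ 2)⁻¹ - exp (-(s * R)) * (cos R + s * sin R) / (1 + s ^ 2) := by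
  have hs : 1 + s ^ 2 ≠ 0 := by positivity
  have hderiv : ∀ t ∈ uIcc 0 R, HasDerivAt
      (fun t => -(exp (-(s * t)) * (cos t + s * sin t)) / (1 + s ^ 2))
      (exp (-(s * t)) * sin t) t := fun t _ => by
    refine ((((hasDerivAt_id' t).const_mul s).fun_neg.exp.fun_mul
      ((hasDerivAt_cos t).fun_add ((hasDerivAt_sin t).const_mul s))).fun_neg.div_const
      (1 + s ^ 2)).congr_deriv ?_
    field_simp
    ring
  rw [intervalIntegral.integral_eq_sub_of_hasDerivAt hderiv
    ((by fun_prop : Continuous fun t => exp (-(s * t)) * sin t).intervalIntegrable 0 R)]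
  simp only [mul_zero, neg_zero, exp_zero, cos_zero, sin_zero, add_zero, one_mul]
  field_simp
  ring

theorem tendsto_integral_sin_div_atTop :
    Tendsto (fun R => ∫ t in 0..R, sin t / t) atTop (𝓝 (π / 2)) := by
  set E : ℝ → ℝ → ℝ := fun R s => exp (-(s * R)) * (cos R + s * sin R) / (1 + s ^ 2)
  have hE : ∀ R, ∀ s ∈ Ioi (0 : ℝ), ‖E R s‖ ≤ 2 * exp (-(s * R)) := by
    intro R s (hs : 0 < s)
    have h1 : 0 < 1 + s ^ 2 := by positivity
    have hcs : |cos R + s * sin R| ≤ 2 * (1 + s ^ 2) := by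
      have := abs_add_le (cos R) (s * sin R)
      rw [abs_mul, abs_of_pos hs] at this
      nlinarith [abs_cos_le_one R, abs_sin_le_one R, sq_nonneg (s - 1)]
    rw [Real.norm_eq_abs, abs_div, abs_mul, abs_of_pos (exp_pos _), abs_of_pos h1,
      div_le_iff₀ h1, mul_assoc, mul_left_comm]
    exact mul_le_mul_of_nonneg_left hcs (exp_pos _).le
  have hsmall : ∀ {R : ℝ}, 0 < R → ‖∫ s in Ioi 0, E R s‖ ≤ 2 * R⁻¹ := fun hR => by
    have h := norm_integral_le_of_norm_le ((integrableOn_Ioi_exp_neg_mul hR).const_mul 2)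
      ((ae_restrict_mem measurableSet_Ioi).mono (hE _))
    rwa [integral_const_mul, integral_Ioi_exp_neg_mul hR] at h
  have heq : ∀ {R : ℝ}, 0 < R →
      ∫ t in 0..R, sin t / t = π / 2 - ∫ s in Ioi 0, E R s := by
    intro R hR
    have hEint : IntegrableOn (E _) (Ioi 0) :=
      ((integrableOn_Ioi_exp_neg_mul hR).const_mul 2).mono'
        (by fun_prop (disch := intro; positivity) : Continuous (E _)).aestronglyMeasurable
        ((ae_restrict_mem measurableSet_Ioi).mono (hE _))
    rw [integral_sin_div_eq_integral_Ioi_laplace hR.le]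
    simp_rw [integral_exp_neg_mul_mul_sin]
    rw [integral_sub integrable_inv_one_add_sq.integrableOn hEint, integral_Ioi_inv_one_add_sq,
      arctan_zero, sub_zero]
  have herr : Tendsto (fun R => ∫ s in Ioi 0, E R s) atTop (𝓝 0) := by
    refine squeeze_zero_norm' ?_ (by simpa using tendsto_inv_atTop_zero.const_mul (2 : ℝ))
    filter_upwards [eventually_gt_atTop 0] with R hR
    exact hsmall hR
  refine (by simpa using tendsto_const_nhds.sub herr :
    Tendsto (fun R => π / 2 - ∫ s in Ioi 0, E R s) atTop (𝓝 (π / 2))).congr' ?_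
  filter_upwards [eventually_gt_atTop 0] with R hR
  exact (heq hR).symm

theorem tendsto_intervalIntegral_add_of_tendsto {E : Type*} [NormedAddCommGroup E]
    [NormedSpace ℝ E] {f : ℝ → E} {a b : ℝ} {l : E} (hab : IntervalIntegrable f volume a b)
    (hb : ∀ᶠ R in atTop, IntervalIntegrable f volume b R)
    (hl : Tendsto (fun R => ∫ t in b..R, f t) atTop (𝓝 l)) :
    Tendsto (fun R => ∫ t in a..R, f t) atTop (𝓝 ((∫ t in a..b, f t) + l)) :=
  (hl.const_add _).congr' <|
    hb.mono fun _ hbR => intervalIntegral.integral_add_adjacent_intervals hab hbR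

lemma intervalIntegrable_sin_div (a b : ℝ) :
    IntervalIntegrable (fun t => sin t / t) volume a b := by
  refine (intervalIntegrable_const (c := (1 : ℝ))).mono_fun'
    (continuous_sin.measurable.div measurable_id).aestronglyMeasurable (ae_of_all _ fun t => ?_)
  rcases eq_or_ne t 0 with rfl | ht
  · simp
  · show ‖sin t / t‖ ≤ 1
    rw [← sinc_of_ne_zero ht, Real.norm_eq_abs]
    exact abs_sinc_le_one t

lemma intervalIntegrable_cos_div {a b : ℝ} (ha : 0 < a) (hb : 0 < b) :
    IntervalIntegrable (fun t => cos t / t) volume a b :=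
  (continuous_cos.continuousOn.div continuousOn_id fun _ ht =>
    ((lt_min ha hb).trans_le ht.1).ne').intervalIntegrable

lemma tendsto_integral_sin_div (x : ℝ) :
    Tendsto (fun R => ∫ t in x..R, sin t / t) atTop (𝓝 (-si x)) := by
  have h := tendsto_intervalIntegral_add_of_tendsto (intervalIntegrable_sin_div x 0)
    (.of_forall (intervalIntegrable_sin_div 0)) tendsto_integral_sin_div_atTop
  rwa [si, h.limUnder_eq, neg_neg]

lemma si_eq_integral_sub (x : ℝ) : si x = (∫ t in 0..x, sin t / t) - π / 2 := by
  have h := tendsto_intervalIntegral_add_of_tendsto (intervalIntegrable_sin_div x 0)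
    (.of_forall (intervalIntegrable_sin_div 0)) tendsto_integral_sin_div_atTop
  have h' := tendsto_nhds_unique (tendsto_integral_sin_div x) h
  rw [intervalIntegral.integral_symm] at h'
  linarith

lemma si_zero : si 0 = -(π / 2) := by
  rw [si_eq_integral_sub, intervalIntegral.integral_same, zero_sub]

lemma continuous_si : Continuous si := by
  rw [funext si_eq_integral_sub]
  exact (intervalIntegral.continuous_primitive intervalIntegrable_sin_div 0).sub continuous_const

lemma hasDerivAt_si {x : ℝ} (hx : x ≠ 0) : HasDerivAt si (sin x / x) x := by
  rw [funext si_eq_integral_sub]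
  exact (intervalIntegral.integral_hasDerivAt_right (intervalIntegrable_sin_div 0 x)
      (continuous_sin.measurable.div measurable_id).stronglyMeasurable.stronglyMeasurableAtFilter
      (continuous_sin.continuousAt.div continuousAt_id hx)).sub_const (π / 2)

lemma tendsto_integral_cos_div {x : ℝ} (hx : 0 < x) :
    Tendsto (fun R => ∫ t in x..R, cos t / t) atTop (𝓝 (-ci x)) := by
  have h := tendsto_intervalIntegral_of_hasDerivAt_sub (f := fun t => cos t / t)
    (g := fun t => sin t / t) (h := fun t => sin t / t ^ 2)
    (continuous_cos.continuousOn.div continuousOn_id fun _ ht => (hx.trans_le ht).ne')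
    (integrableOn_Ioi_div_pow continuous_sin abs_sin_le_one le_rfl hx)
    (fun t (ht : x ≤ t) => ((hasDerivAt_sin t).div (hasDerivAt_id' t)
      (hx.trans_le ht).ne').congr_deriv (by field_simp))
    (tendsto_div_atTop_of_abs_le abs_sin_le_one tendsto_id)
  rwa [ci, h.limUnder_eq, neg_neg]

lemma ci_eq_add_integral {x : ℝ} (hx : 0 < x) : ci x = ci 1 + ∫ t in 1..x, cos t / t := by
  have h := tendsto_intervalIntegral_add_of_tendsto (intervalIntegrable_cos_div hx one_pos)
    ((eventually_gt_atTop 0).mono fun _ hR => intervalIntegrable_cos_div one_pos hR)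
    (tendsto_integral_cos_div one_pos)
  rw [ci, h.limUnder_eq, intervalIntegral.integral_symm]
  ring

lemma hasDerivAt_ci {x : ℝ} (hx : 0 < x) : HasDerivAt ci (cos x / x) x := by
  have h := (intervalIntegral.integral_hasDerivAt_right (intervalIntegrable_cos_div one_pos hx)
    (continuous_cos.measurable.div measurable_id).stronglyMeasurable.stronglyMeasurableAtFilter
    (continuous_cos.continuousAt.div continuousAt_id hx.ne')).const_add (ci 1)
  exact h.congr_of_eventuallyEq
    (eventually_of_mem (Ioi_mem_nhds hx) fun y hy => ci_eq_add_integral hy)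

lemma abs_ci_le {x : ℝ} (hx : 0 < x) : |ci x| ≤ |ci 1| + |log x| := by
  have hpos : ∀ t ∈ uIoc 1 x, 0 < t := fun t ht => (lt_min one_pos hx).trans ht.1
  have h := intervalIntegral.norm_integral_le_abs_of_norm_le (f := fun t => cos t / t)
    (g := fun t => t⁻¹) ((ae_restrict_mem measurableSet_uIoc).mono fun t ht => ?_)
    (intervalIntegral.intervalIntegrable_inv (f := id) (μ := volume)
      (fun t ht => ((lt_min one_pos hx).trans_le ht.1).ne') continuousOn_id)
  · rw [integral_inv_of_pos one_pos hx, div_one, Real.norm_eq_abs] at h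
    rw [ci_eq_add_integral hx]
    exact (abs_add_le _ _).trans (add_le_add_right h _)
  · rw [norm_div, Real.norm_eq_abs, norm_of_nonneg (hpos t ht).le, div_eq_mul_inv]
    exact mul_le_of_le_one_left (inv_nonneg.2 (hpos t ht).le) (abs_cos_le_one t)

lemma continuousWithinAt_ci_mul_sin : ContinuousWithinAt (fun y => ci y * sin y) (Ici 0) 0 := by
  have hbound : Tendsto (fun y => |y| * |ci 1| + |y * log y|) (𝓝[Ici 0] 0) (𝓝 0) := by
    refine Tendsto.mono_left ?_ nhdsWithin_le_nhds
    have hc : Continuous fun y => |y| * |ci 1| + |y * log y| :=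
      (continuous_abs.mul continuous_const).add continuous_mul_log.abs
    simpa using hc.tendsto 0
  rw [ContinuousWithinAt, sin_zero, mul_zero]
  refine squeeze_zero_norm' ?_ hbound
  filter_upwards [self_mem_nhdsWithin] with y (hy : 0 ≤ y)
  rcases hy.eq_or_lt with rfl | hy
  · simp
  rw [norm_mul, Real.norm_eq_abs, Real.norm_eq_abs, abs_mul y]
  nlinarith [abs_ci_le hy, abs_sin_le_abs (x := y), abs_nonneg (ci y), abs_nonneg (sin y),
    abs_nonneg y]

noncomputable def sProfile (y : ℝ) : ℝ := si y * cos y - ci y * sin y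

-- `Tker a x = tProfile (a * |x|)`.
noncomputable def tProfile (y : ℝ) : ℝ := si y * sin y + ci y * cos y

lemma abs_one_sub_cos_le (x : ℝ) : |1 - cos x| ≤ 2 :=
  abs_le.2 ⟨by linarith [cos_le_one x], by linarith [neg_one_le_cos x]⟩

lemma tendsto_integral_mul_sin_add_mul_cos_div {y : ℝ} (hy : 0 < y) (p q : ℝ) :
    Tendsto (fun R => ∫ t in y..R, (p * sin t + q * cos t) / t) atTop
      (𝓝 (-(p * si y + q * ci y))) := by
  have h := ((tendsto_integral_sin_div y).const_mul p).add
    ((tendsto_integral_cos_div hy).const_mul q)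
  rw [mul_neg, mul_neg, ← neg_add] at h
  refine h.congr' ?_
  filter_upwards [eventually_gt_atTop 0] with R hR
  simp_rw [add_div, mul_div_assoc]
  rw [intervalIntegral.integral_add ((intervalIntegrable_sin_div y R).const_mul p)
    ((intervalIntegrable_cos_div hy hR).const_mul q), intervalIntegral.integral_const_mul,
    intervalIntegral.integral_const_mul]

lemma sProfile_eq_neg_integral {y : ℝ} (hy : 0 < y) :
    sProfile y = -∫ t in Ioi y, (1 - cos (t - y)) / t ^ 2 := by
  have h := tendsto_intervalIntegral_of_hasDerivAt_sub (f := fun t => sin (t - y) / t)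
    (g := fun t => (1 - cos (t - y)) / t) (h := fun t => (1 - cos (t - y)) / t ^ 2)
    (by fun_prop (disch := intro t ht; exact (hy.trans_le ht).ne'))
    (integrableOn_Ioi_div_pow (by fun_prop) (fun t => abs_one_sub_cos_le (t - y)) le_rfl hy)
    (fun t (ht : y ≤ t) => ?_)
    (tendsto_div_atTop_of_abs_le (fun t => abs_one_sub_cos_le (t - y)) tendsto_id)
  · have hsum : ∀ t, sin (t - y) = cos y * sin t + -sin y * cos t := fun t => by
      rw [sin_sub]; ring
    have h' := tendsto_integral_mul_sin_add_mul_cos_div hy (cos y) (-sin y)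
    simp only [← hsum] at h'
    simp only [sub_self, cos_zero, zero_div, sub_zero] at h
    have := tendsto_nhds_unique h h'
    rw [sProfile]
    linarith
  · have ht0 : t ≠ 0 := (hy.trans_le ht).ne'
    refine ((((hasDerivAt_id' t).sub_const y).cos.const_sub 1).div (hasDerivAt_id' t)
      ht0).congr_deriv ?_
    field_simp

-- The antiderivative `g` is chosen to vanish at `t = y` and to leave a nonnegative remainder `h`.
lemma tProfile_eq_neg_integral {y : ℝ} (hy : 0 < y) :
    tProfile y = -∫ t in Ioi y, 2 * (1 - cos (t - y)) / t ^ 3 := by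
  have hg : Tendsto (fun t => sin (t - y) / t + (1 - cos (t - y)) / t ^ 2) atTop (𝓝 0) := by
    simpa using (tendsto_div_atTop_of_abs_le (fun t => abs_sin_le_one (t - y)) tendsto_id).add
      (tendsto_div_atTop_of_abs_le (fun t => abs_one_sub_cos_le (t - y))
        (tendsto_pow_atTop two_ne_zero))
  have h := tendsto_intervalIntegral_of_hasDerivAt_sub (f := fun t => cos (t - y) / t)
    (g := fun t => sin (t - y) / t + (1 - cos (t - y)) / t ^ 2)
    (h := fun t => 2 * (1 - cos (t - y)) / t ^ 3)
    (by fun_prop (disch := intro t ht; exact (hy.trans_le ht).ne'))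
    (integrableOn_Ioi_div_pow (C := 4) (by fun_prop)
      (fun t => by rw [abs_mul, abs_two]; linarith [abs_one_sub_cos_le (t - y)]) (by norm_num) hy)
    (fun t (ht : y ≤ t) => ?_) hg
  · have hsum : ∀ t, cos (t - y) = sin y * sin t + cos y * cos t := fun t => by
      rw [cos_sub]; ring
    have h' := tendsto_integral_mul_sin_add_mul_cos_div hy (sin y) (cos y)
    simp only [← hsum] at h'
    simp only [sub_self, sin_zero, cos_zero, zero_div, sub_zero, add_zero] at h
    have := tendsto_nhds_unique h h'
    rw [tProfile]
    linarith
  · have ht0 : t ≠ 0 := (hy.trans_le ht).ne'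
    have hsin := ((hasDerivAt_id' t).sub_const y).sin.div (hasDerivAt_id' t) ht0
    have hcos := (((hasDerivAt_id' t).sub_const y).cos.const_sub 1).div (hasDerivAt_pow 2 t)
      (pow_ne_zero 2 ht0)
    refine (hsin.add hcos).congr_deriv ?_
    field_simp
    ring

lemma tProfile_nonpos {y : ℝ} (hy : 0 < y) : tProfile y ≤ 0 := by
  rw [tProfile_eq_neg_integral hy, neg_nonpos]
  refine setIntegral_nonneg measurableSet_Ioi fun t ht => ?_
  have := cos_le_one (t - y)
  have : 0 < t := hy.trans ht
  positivity

lemma tendsto_sProfile_atTop : Tendsto sProfile atTop (𝓝 0) := by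
  refine squeeze_zero_norm' (a := fun y => 2 / y) ?_ (tendsto_const_nhds.div_atTop tendsto_id)
  filter_upwards [eventually_gt_atTop 0] with y hy
  rw [sProfile_eq_neg_integral hy, norm_neg]
  exact abs_integral_Ioi_div_sq_le (fun t => abs_one_sub_cos_le (t - y)) hy

lemma hasDerivAt_sProfile {y : ℝ} (hy : 0 < y) : HasDerivAt sProfile (-tProfile y) y := by
  refine (((hasDerivAt_si hy.ne').mul (hasDerivAt_cos y)).sub
    ((hasDerivAt_ci hy).mul (hasDerivAt_sin y))).congr_deriv ?_
  rw [tProfile]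
  ring

lemma continuousWithinAt_sProfile : ContinuousWithinAt sProfile (Ici 0) 0 :=
  (continuous_si.mul continuous_cos).continuousWithinAt.sub continuousWithinAt_ci_mul_sin

lemma sProfile_zero : sProfile 0 = -(π / 2) := by
  simp [sProfile, si_zero]

lemma integrableOn_Ioi_tProfile : IntegrableOn tProfile (Ioi 0) := by
  simpa using (integrableOn_Ioi_deriv_of_nonneg continuousWithinAt_sProfile
    (fun y hy => hasDerivAt_sProfile hy) (fun y hy => neg_nonneg.2 (tProfile_nonpos hy))
    tendsto_sProfile_atTop).neg

lemma integral_Ioi_tProfile : ∫ y in Ioi 0, tProfile y = -(π / 2) := by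
  have h := integral_Ioi_of_hasDerivAt_of_nonneg continuousWithinAt_sProfile
    (fun y hy => hasDerivAt_sProfile hy) (fun y hy => neg_nonneg.2 (tProfile_nonpos hy))
    tendsto_sProfile_atTop
  rw [integral_neg, sProfile_zero] at h
  linarith

theorem integrable_comp_abs {E : Type*} [NormedAddCommGroup E] {f : ℝ → E}
    (hf : IntegrableOn f (Ioi 0)) : Integrable (fun x => f |x|) := by
  have hIoi : IntegrableOn (fun x => f |x|) (Ioi 0) :=
    hf.congr_fun (fun x hx => by rw [abs_of_pos hx]) measurableSet_Ioi
  have hIic : IntegrableOn (fun x => f |x|) (Iic 0) := by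
    have hneg : MeasurableEmbedding fun x : ℝ => -x := (Homeomorph.neg ℝ).measurableEmbedding
    rw [← Measure.map_neg_eq_self (volume : Measure ℝ), hneg.integrableOn_map_iff]
    simp_rw [Function.comp_def, abs_neg, neg_preimage, neg_Iic, neg_zero]
    exact Iff.mpr integrableOn_Ici_iff_integrableOn_Ioi hIoi
  simpa using hIic.union hIoi

/-- `T_a` is integrable on `ℝ` with total integral `-π/a`. -/
theorem stmt2 (a : ℝ) (ha : 0 < a) :
    Integrable (fun x : ℝ => Tker a x) ∧ (∫ x : ℝ, Tker a x) = -Real.pi / a := by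
  have hint : IntegrableOn (fun y => tProfile (a * y)) (Ioi 0) := by
    rw [integrableOn_Ioi_comp_mul_left_iff _ _ ha, mul_zero]
    exact integrableOn_Ioi_tProfile
  refine ⟨integrable_comp_abs hint, ?_⟩
  change ∫ x, tProfile (a * |x|) = _
  rw [integral_comp_abs (f := fun y => tProfile (a * y)), integral_comp_mul_left_Ioi _ _ ha,
    mul_zero, integral_Ioi_tProfile, smul_eq_mul]
  field_simp
end

section
/- For every a > 0 and every real x ≠ 0, the improper integral ∫_0^∞ cos(x·ξ)/(ξ + a) dξ converges and equals −T_a(x) = −(si(a|x|)·sin(a|x|) + ci(a|x|)·cos(a|x|)). -/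
open Filter MeasureTheory Topology

/-!
Substituting `v = |x| (ξ + a)` turns `∫_0^R cos(xξ)/(ξ+a) dξ` into `∫_b^{|x|R+b} cos(v - b)/v dv`
with `b = a|x|`, and the addition formula for `cos` splits this into
`cos b ∫_b cos v / v + sin b ∫_b sin v / v`. Both improper integrals exist because integrating
by parts against a bounded primitive `g` of the numerator leaves the absolutely integrable
`g(t)/t²`.
-/

lemma integrableOn_Ioi_inv_sq {b : ℝ} (hb : 0 < b) :
    IntegrableOn (fun t : ℝ => (t ^ 2)⁻¹) (Set.Ioi b) := by
  refine (integrableOn_Ioi_rpow_of_lt (by norm_num : (-2 : ℝ) < -1) hb).congr_fun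
    (fun t ht => ?_) measurableSet_Ioi
  simp only [Real.rpow_neg (hb.trans ht).le, Real.rpow_two]

lemma integrableOn_Ioi_inv_sq_mul_of_bounded {g : ℝ → ℝ} {b M : ℝ} (hb : 0 < b)
    (hg : Continuous g) (hbd : ∀ t, |g t| ≤ M) :
    IntegrableOn (fun t : ℝ => (t ^ 2)⁻¹ * g t) (Set.Ioi b) := by
  refine ((integrableOn_Ioi_inv_sq hb).mul_const M).mono' ?_ ?_
  · refine (ContinuousOn.mul (ContinuousOn.inv₀ (by fun_prop) fun t ht => ?_)
      hg.continuousOn).aestronglyMeasurable measurableSet_Ioi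
    exact pow_ne_zero 2 (hb.trans ht).ne'
  · filter_upwards [ae_restrict_mem measurableSet_Ioi] with t ht
    rw [norm_mul, Real.norm_of_nonneg (by positivity)]
    exact mul_le_mul_of_nonneg_left (hbd t) (by positivity)

lemma tendsto_inv_mul_of_bounded {g : ℝ → ℝ} {M : ℝ} (hbd : ∀ t, |g t| ≤ M) :
    Tendsto (fun R : ℝ => R⁻¹ * g R) atTop (𝓝 0) := by
  have hM : Tendsto (fun R : ℝ => R⁻¹ * M) atTop (𝓝 0) := by
    simpa using tendsto_inv_atTop_zero.mul_const M
  refine squeeze_zero_norm' ?_ hM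
  filter_upwards [eventually_gt_atTop (0 : ℝ)] with R hR
  rw [norm_mul, Real.norm_of_nonneg (inv_nonneg.mpr hR.le)]
  exact mul_le_mul_of_nonneg_left (hbd R) (inv_nonneg.mpr hR.le)

/-- Integrating by parts, `∫_b^R f t / t = g R / R - g b / b + ∫_b^R g t / t²`. -/
lemma exists_tendsto_integral_div_self_of_hasDerivAt {f g : ℝ → ℝ} {b M : ℝ} (hb : 0 < b)
    (hf : Continuous f) (hg : ∀ t, HasDerivAt g (f t) t) (hbd : ∀ t, |g t| ≤ M) :
    ∃ l, Tendsto (fun R : ℝ => ∫ t in b..R, f t / t) atTop (𝓝 l) := by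
  have hgc : Continuous g := continuous_iff_continuousAt.mpr fun t => (hg t).continuousAt
  have hrest := intervalIntegral_tendsto_integral_Ioi b
    (integrableOn_Ioi_inv_sq_mul_of_bounded hb hgc hbd) tendsto_id
  refine ⟨0 - b⁻¹ * g b + ∫ t in Set.Ioi b, (t ^ 2)⁻¹ * g t,
    (((tendsto_inv_mul_of_bounded hbd).sub_const _).add hrest).congr' ?_⟩
  filter_upwards [eventually_ge_atTop b] with R hR
  have hpos : ∀ t ∈ Set.uIcc b R, 0 < t := fun t ht =>
    hb.trans_le (Set.uIcc_of_le hR ▸ ht).1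
  have ibp := intervalIntegral.integral_mul_deriv_eq_deriv_mul
    (fun t ht => hasDerivAt_inv (hpos t ht).ne') (fun t _ => hg t)
    (ContinuousOn.intervalIntegrable (ContinuousOn.neg (ContinuousOn.inv₀ (by fun_prop)
      fun t ht => pow_ne_zero 2 (hpos t ht).ne'))) (hf.intervalIntegrable b R)
  simp only [neg_mul, intervalIntegral.integral_neg, sub_neg_eq_add] at ibp
  simp only [div_eq_inv_mul, ibp, id]

lemma tendsto_integral_sin_div_self {b : ℝ} (hb : 0 < b) :
    Tendsto (fun R : ℝ => ∫ t in b..R, Real.sin t / t) atTop (𝓝 (-si b)) := by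
  rw [si, neg_neg]
  exact tendsto_nhds_limUnder (exists_tendsto_integral_div_self_of_hasDerivAt hb
    Real.continuous_sin (fun t => by simpa using (Real.hasDerivAt_cos t).fun_neg)
    (fun t => (abs_neg _).trans_le (Real.abs_cos_le_one t)))

lemma tendsto_integral_cos_div_self {b : ℝ} (hb : 0 < b) :
    Tendsto (fun R : ℝ => ∫ t in b..R, Real.cos t / t) atTop (𝓝 (-ci b)) := by
  rw [ci, neg_neg]
  exact tendsto_nhds_limUnder (exists_tendsto_integral_div_self_of_hasDerivAt hb
    Real.continuous_cos Real.hasDerivAt_sin Real.abs_sin_le_one)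

lemma integral_cos_mul_div_add_eq {a c : ℝ} (hc : 0 < c) (R : ℝ) :
    ∫ ξ in (0 : ℝ)..R, Real.cos (c * ξ) / (ξ + a)
      = ∫ v in a * c..c * R + a * c, Real.cos (v - a * c) / v := by
  calc ∫ ξ in (0 : ℝ)..R, Real.cos (c * ξ) / (ξ + a)
      = ∫ ξ in (0 : ℝ)..R, c * (Real.cos (c * ξ + a * c - a * c) / (c * ξ + a * c)) := by
        refine intervalIntegral.integral_congr fun ξ _ => ?_
        rw [add_sub_cancel_right, show c * ξ + a * c = c * (ξ + a) by ring, ← mul_div_assoc,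
          mul_div_mul_left _ _ hc.ne']
    _ = c * (c⁻¹ • ∫ v in c * 0 + a * c..c * R + a * c, Real.cos (v - a * c) / v) := by
        rw [intervalIntegral.integral_const_mul, intervalIntegral.integral_comp_mul_add
          (fun v => Real.cos (v - a * c) / v) hc.ne']
    _ = ∫ v in a * c..c * R + a * c, Real.cos (v - a * c) / v := by
        rw [smul_eq_mul, mul_inv_cancel_left₀ hc.ne', mul_zero, zero_add]

lemma integral_cos_sub_div_self {b V : ℝ} (hb : 0 < b) (hV : b ≤ V) :
    ∫ v in b..V, Real.cos (v - b) / v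
      = Real.cos b * (∫ v in b..V, Real.cos v / v) + Real.sin b * ∫ v in b..V, Real.sin v / v := by
  have hne : ∀ v ∈ Set.uIcc b V, v ≠ 0 := fun v hv =>
    (hb.trans_le (Set.uIcc_of_le hV ▸ hv).1).ne'
  have hcos : IntervalIntegrable (fun v => Real.cos v / v) volume b V :=
    (ContinuousOn.div (by fun_prop) (by fun_prop) hne).intervalIntegrable
  have hsin : IntervalIntegrable (fun v => Real.sin v / v) volume b V :=
    (ContinuousOn.div (by fun_prop) (by fun_prop) hne).intervalIntegrable
  rw [← intervalIntegral.integral_const_mul, ← intervalIntegral.integral_const_mul,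
    ← intervalIntegral.integral_add (hcos.const_mul _) (hsin.const_mul _)]
  congr 1 with v
  rw [Real.cos_sub]
  ring

lemma Real.cos_abs_mul (x y : ℝ) : Real.cos (|x| * y) = Real.cos (x * y) := by
  rcases abs_choice x with h | h <;> simp [h]

/-- `∫_0^∞ cos(xξ)/(ξ+a) dξ` converges (as an improper integral) to `-T_a(x)`. -/
theorem stmt3 (a : ℝ) (ha : 0 < a) (x : ℝ) (hx : x ≠ 0) :
    Tendsto (fun R : ℝ => ∫ ξ in (0:ℝ)..R, Real.cos (x * ξ) / (ξ + a))
      atTop (nhds (-(Tker a x))) := by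
  have hc : 0 < |x| := abs_pos.mpr hx
  set b := a * |x| with hb_def
  have hb : 0 < b := mul_pos ha hc
  have hV : Tendsto (fun R : ℝ => |x| * R + b) atTop atTop :=
    tendsto_atTop_add_const_right _ b (tendsto_id.const_mul_atTop hc)
  have hlim := (((tendsto_integral_cos_div_self hb).comp hV).const_mul (Real.cos b)).add
    (((tendsto_integral_sin_div_self hb).comp hV).const_mul (Real.sin b))
  rw [show -Tker a x = Real.cos b * -ci b + Real.sin b * -si b by rw [Tker]; ring]
  refine hlim.congr' ?_
  filter_upwards [eventually_ge_atTop 0] with R hR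
  simp only [Function.comp_apply, ← Real.cos_abs_mul x]
  rw [integral_cos_mul_div_add_eq hc, ← hb_def,
    integral_cos_sub_div_self hb (le_add_of_nonneg_left (by positivity))]
end

section
/- For every λ with 0 < λ < 1, the integral ∫_0^∞ |1 + u·(si(u)·cos(u) − ci(u)·sin(u))| / u^{1−λ} du is finite. (Equivalently, with Σ₁(u) := −u·(si(u)·cos u − ci(u)·sin u), the integral ∫_0^∞ |Σ₁(u) − 1|/u^{1−λ} du converges.) -/
/-!
For `u > 0`, integrating by parts turns `si u` and `ci u` into absolutely convergent integrals,
and the combination collapses to `1 + u (si u cos u - ci u sin u) = u G(u)` with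
`G(u) = ∫_u^∞ cos (t - u) / t² dt`. Directly `|G u| ≤ 1 / u`, and a second integration by parts,
`G u = 2 ∫_u^∞ sin (t - u) / t³ dt`, gives `|G u| ≤ 1 / u²`. Hence the integrand is at most
`u ^ (λ - 1)` on `(0, 1]` and at most `u ^ (λ - 2)` on `(1, ∞)`.
-/

open Filter MeasureTheory Topology

open Real Set

lemma integrableOn_Ioi_mul_rpow {f : ℝ → ℝ} (hf : Measurable f) (hf1 : ∀ t, |f t| ≤ 1)
    {p u : ℝ} (hp : p < -1) (hu : 0 < u) :
    IntegrableOn (fun t => f t * t ^ p) (Ioi u) := by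
  refine (integrableOn_Ioi_rpow_of_lt hp hu).mono' (by fun_prop) ?_
  filter_upwards [ae_restrict_mem measurableSet_Ioi] with t ht
  rw [norm_mul, norm_of_nonneg (rpow_nonneg (hu.trans ht).le p)]
  exact mul_le_of_le_one_left (rpow_nonneg (hu.trans ht).le p) (hf1 t)

lemma abs_setIntegral_Ioi_mul_rpow_le {f : ℝ → ℝ} (hf1 : ∀ t, |f t| ≤ 1)
    {p u : ℝ} (hp : p < -1) (hu : 0 < u) :
    |∫ t in Ioi u, f t * t ^ p| ≤ -u ^ (p + 1) / (p + 1) := by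
  rw [← integral_Ioi_rpow_of_lt hp hu, ← norm_eq_abs]
  refine norm_integral_le_of_norm_le (integrableOn_Ioi_rpow_of_lt hp hu) ?_
  filter_upwards [ae_restrict_mem measurableSet_Ioi] with t ht
  rw [norm_mul, norm_of_nonneg (rpow_nonneg (hu.trans ht).le p)]
  exact mul_le_of_le_one_left (rpow_nonneg (hu.trans ht).le p) (hf1 t)

lemma integral_deriv_mul_rpow_eq_sub {A A' : ℝ → ℝ} (hA : ∀ x, HasDerivAt A (A' x) x)
    (hA' : Continuous A') {p u R : ℝ} (hu : 0 < u) (hR : u ≤ R) :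
    ∫ t in u..R, A' t * t ^ p
      = A R * R ^ p - A u * u ^ p - p * ∫ t in u..R, A t * t ^ (p - 1) := by
  have hne : ∀ x ∈ uIcc u R, x ≠ 0 := fun x hx =>
    (hu.trans_le (uIcc_of_le hR ▸ hx).1).ne'
  have hder : IntervalIntegrable (fun t => p * t ^ (p - 1)) volume u R :=
    (ContinuousOn.intervalIntegrable fun x hx =>
      (continuousAt_const.mul (continuousAt_rpow_const x _ (Or.inl (hne x hx)))).continuousWithinAt)
  have hparts := intervalIntegral.integral_mul_deriv_eq_deriv_mul
    (fun x hx => hasDerivAt_rpow_const (Or.inl (hne x hx))) (fun x _ => hA x) hder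
    (hA'.intervalIntegrable u R)
  simp only [mul_comm (A' _), mul_comm (A _), mul_assoc] at hparts ⊢
  rw [hparts, intervalIntegral.integral_const_mul]

lemma tendsto_integral_deriv_mul_rpow {A A' : ℝ → ℝ} (hA : ∀ x, HasDerivAt A (A' x) x)
    (hA' : Continuous A') (hA1 : ∀ x, |A x| ≤ 1) {p u : ℝ} (hp : p < 0) (hu : 0 < u) :
    Tendsto (fun R => ∫ t in u..R, A' t * t ^ p) atTop
      (𝓝 (-(A u * u ^ p) - p * ∫ t in Ioi u, A t * t ^ (p - 1))) := by
  have hboundary : Tendsto (fun R => A R * R ^ p) atTop (𝓝 0) := by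
    refine isBoundedUnder_le_mul_tendsto_zero ⟨1, eventually_map.2 (Eventually.of_forall hA1)⟩ ?_
    simpa using tendsto_rpow_neg_atTop (neg_pos.2 hp)
  have htail := intervalIntegral_tendsto_integral_Ioi u
    (integrableOn_Ioi_mul_rpow (continuous_iff_continuousAt.2 fun x => (hA x).continuousAt).measurable
      hA1 (by linarith : p - 1 < -1) hu) tendsto_id
  have hlim := (hboundary.sub_const (A u * u ^ p)).sub (htail.const_mul p)
  rw [zero_sub] at hlim
  refine hlim.congr' ?_
  filter_upwards [eventually_ge_atTop u] with R hR
  exact (integral_deriv_mul_rpow_eq_sub hA hA' hu hR).symm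

lemma si_eq_of_pos {u : ℝ} (hu : 0 < u) :
    si u = (∫ t in Ioi u, cos t * t ^ (-2 : ℝ)) - cos u * u ^ (-1 : ℝ) := by
  have hlim := tendsto_integral_deriv_mul_rpow (A := fun t => -cos t)
    (fun x => by simpa using (hasDerivAt_cos x).fun_neg) continuous_sin
    (fun x => by simpa using abs_cos_le_one x) (p := -1) (by norm_num) hu
  simp only [rpow_neg_one, ← div_eq_mul_inv] at hlim
  rw [si, hlim.limUnder_eq, show (-1 : ℝ) - 1 = -2 by norm_num]
  simp only [neg_mul, integral_neg, rpow_neg_one, div_eq_mul_inv]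
  ring

lemma ci_eq_of_pos {u : ℝ} (hu : 0 < u) :
    ci u = sin u * u ^ (-1 : ℝ) - ∫ t in Ioi u, sin t * t ^ (-2 : ℝ) := by
  have hlim := tendsto_integral_deriv_mul_rpow hasDerivAt_sin continuous_cos
    abs_sin_le_one (p := -1) (by norm_num) hu
  simp only [rpow_neg_one, ← div_eq_mul_inv] at hlim
  rw [ci, hlim.limUnder_eq, show (-1 : ℝ) - 1 = -2 by norm_num]
  simp only [rpow_neg_one, div_eq_mul_inv]
  ring

lemma measurable_setIntegral_Ioi {f : ℝ → ℝ → ℝ} (hf : Measurable (Function.uncurry f)) :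
    Measurable fun u => ∫ t in Ioi u, f u t := by
  have hind : StronglyMeasurable fun q : ℝ × ℝ => if q.1 < q.2 then f q.1 q.2 else 0 :=
    (Measurable.ite (measurableSet_lt measurable_fst measurable_snd) hf
      measurable_const).stronglyMeasurable
  convert (hind.integral_prod_right' (ν := volume)).measurable using 2 with u
  rw [← integral_indicator measurableSet_Ioi]
  rfl

noncomputable def cosTail (u : ℝ) : ℝ := ∫ t in Ioi u, cos (t - u) * t ^ (-2 : ℝ)

lemma measurable_cosTail : Measurable cosTail :=
  measurable_setIntegral_Ioi (f := fun u t => cos (t - u) * t ^ (-2 : ℝ)) (by fun_prop)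

lemma one_add_mul_si_cos_sub_ci_sin {u : ℝ} (hu : 0 < u) :
    1 + u * (si u * cos u - ci u * sin u) = u * cosTail u := by
  have hcos := integrableOn_Ioi_mul_rpow measurable_cos abs_cos_le_one (p := -2) (by norm_num) hu
  have hsin := integrableOn_Ioi_mul_rpow measurable_sin abs_sin_le_one (p := -2) (by norm_num) hu
  have hsplit : cosTail u = cos u * (∫ t in Ioi u, cos t * t ^ (-2 : ℝ))
      + sin u * ∫ t in Ioi u, sin t * t ^ (-2 : ℝ) := by
    rw [cosTail, ← integral_const_mul, ← integral_const_mul,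
      ← integral_add (hcos.const_mul _) (hsin.const_mul _)]
    simp only [cos_sub]
    congr 1 with t
    ring
  have hinv : u * u ^ (-1 : ℝ) = 1 := by rw [rpow_neg_one, mul_inv_cancel₀ hu.ne']
  rw [si_eq_of_pos hu, ci_eq_of_pos hu, hsplit]
  linear_combination (-(u * u ^ (-1 : ℝ))) * sin_sq_add_cos_sq u - hinv

lemma abs_cosTail_le_inv {u : ℝ} (hu : 0 < u) : |cosTail u| ≤ u⁻¹ := by
  have h := abs_setIntegral_Ioi_mul_rpow_le (fun t => abs_cos_le_one (t - u))
    (p := -2) (by norm_num) hu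
  rwa [show (-2 : ℝ) + 1 = -1 by norm_num, rpow_neg_one, neg_div_neg_eq, div_one] at h

lemma cosTail_eq_two_mul {u : ℝ} (hu : 0 < u) :
    cosTail u = 2 * ∫ t in Ioi u, sin (t - u) * t ^ (-3 : ℝ) := by
  have hparts := tendsto_integral_deriv_mul_rpow (A := fun t => sin (t - u))
    (fun x => by simpa using ((hasDerivAt_id x).sub_const u).sin)
    (by fun_prop) (fun x => abs_sin_le_one (x - u)) (p := -2) (by norm_num) hu
  have htail := intervalIntegral_tendsto_integral_Ioi u
    (integrableOn_Ioi_mul_rpow (f := fun t => cos (t - u)) (by fun_prop)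
      (fun t => abs_cos_le_one (t - u)) (p := -2) (by norm_num) hu) tendsto_id
  rw [cosTail, tendsto_nhds_unique htail hparts]
  norm_num

lemma abs_cosTail_le_inv_sq {u : ℝ} (hu : 0 < u) : |cosTail u| ≤ (u ^ 2)⁻¹ := by
  have h := abs_setIntegral_Ioi_mul_rpow_le (fun t => abs_sin_le_one (t - u))
    (p := -3) (by norm_num) hu
  rw [show (-3 : ℝ) + 1 = -2 by norm_num, rpow_neg hu.le, rpow_two, neg_div_neg_eq] at h
  rw [cosTail_eq_two_mul hu, abs_mul, abs_two]
  linarith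

lemma integrableOn_Ioi_div_rpow_of_abs_le {g : ℝ → ℝ} {q : ℝ} (hq0 : 0 < q) (hq1 : q < 1)
    (hg : AEStronglyMeasurable g (volume.restrict (Ioi 0)))
    (hg1 : ∀ u, 0 < u → |g u| ≤ 1) (hginv : ∀ u, 0 < u → |g u| ≤ u⁻¹) :
    IntegrableOn (fun u => g u / u ^ q) (Ioi 0) := by
  have hmeas : AEStronglyMeasurable (fun u => g u / u ^ q) (volume.restrict (Ioi 0)) :=
    hg.div₀ (by fun_prop : Measurable fun u : ℝ => u ^ q).aestronglyMeasurable
  have hnorm : ∀ u, 0 < u → ‖g u / u ^ q‖ = |g u| / u ^ q := fun u hu => by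
    rw [norm_div, norm_eq_abs, norm_of_nonneg (rpow_nonneg hu.le q)]
  rw [← Ioc_union_Ioi_eq_Ioi zero_le_one]
  refine IntegrableOn.union ?_ ?_
  · refine (intervalIntegral.intervalIntegrable_rpow' (r := -q) (by linarith)).1.mono'
      (hmeas.mono_set Ioc_subset_Ioi_self) ?_
    filter_upwards [ae_restrict_mem measurableSet_Ioc] with u hu
    rw [hnorm u hu.1, rpow_neg hu.1.le, inv_eq_one_div]
    exact div_le_div_of_nonneg_right (hg1 u hu.1) (rpow_nonneg hu.1.le q)
  · refine (integrableOn_Ioi_rpow_of_lt (a := -1 - q) (by linarith) one_pos).mono'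
      (hmeas.mono_set (Ioi_subset_Ioi zero_le_one)) ?_
    filter_upwards [ae_restrict_mem measurableSet_Ioi] with u hu
    have hu0 : 0 < u := one_pos.trans hu
    rw [hnorm u hu0, rpow_sub hu0, rpow_neg_one]
    gcongr
    exact hginv u hu0

lemma abs_mul_cosTail_le_one {u : ℝ} (hu : 0 < u) : |u * cosTail u| ≤ 1 := by
  rw [abs_mul, abs_of_pos hu, ← mul_inv_cancel₀ hu.ne']
  exact mul_le_mul_of_nonneg_left (abs_cosTail_le_inv hu) hu.le

lemma abs_mul_cosTail_le_inv {u : ℝ} (hu : 0 < u) : |u * cosTail u| ≤ u⁻¹ := by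
  rw [abs_mul, abs_of_pos hu, show u⁻¹ = u * (u ^ 2)⁻¹ by field_simp]
  exact mul_le_mul_of_nonneg_left (abs_cosTail_le_inv_sq hu) hu.le

/-- for `0 < λ < 1`,
`∫_0^∞ |1 + u (si(u) cos u - ci(u) sin u)| / u^{1-λ} du < ∞`. -/
theorem stmt15 (lam : ℝ) (hlam0 : 0 < lam) (hlam1 : lam < 1) :
    IntegrableOn
      (fun u : ℝ => |1 + u * (si u * Real.cos u - ci u * Real.sin u)| / u ^ (1 - lam))
      (Set.Ioi 0) := by
  refine (integrableOn_Ioi_div_rpow_of_abs_le (g := fun u => |u * cosTail u|) (q := 1 - lam)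
    (by linarith) (by linarith) (measurable_id.mul measurable_cosTail).abs.aestronglyMeasurable
    (fun u hu => by simpa using abs_mul_cosTail_le_one hu)
    (fun u hu => by simpa using abs_mul_cosTail_le_inv hu)).congr_fun ?_ measurableSet_Ioi
  intro u hu
  simp only [one_add_mul_si_cos_sub_ci_sin hu]
end
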